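/- arXiv:2412.18571 — 5 statements merged into one kernel-verified Lean document; each statement's English description precedes it below -/
import Mathlib

section
/- For Boolean values x1, x2, x3 ∈ {0,1}, the minimum over xc ∈ {0,1} of the clause-encoding function Q(x1, x2, x3, xc) equals 0 if x1 + x2 + x3 ≥ 1 (i.e., the clause with literal values x1, x2, x3 is satisfied), and equals 1 if x1 = x2 = x3 = 0 (i.e., the clause is unsatisfied). -/
/-!
Since `Q` is affine in `xc`, `Q(x, 1) = Q(x, 0) + (2 - s)` with `s = x1 + x2 + x3`. For Boolean
literals the pairwise products count the pairs of true literals, so `2 Q(x, 0) = (s - 1)(s - 2)`.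
Both values therefore depend only on `s ∈ {0, 1, 2, 3}`, and the minimum is `1` for `s = 0`
(values `1, 3`) and `0` otherwise (values `0, 1`, then `0, 0`, then `1, 0`).
-/

def clauseQ (x1 x2 x3 xc : ℤ) : ℤ :=
  xc * (2 - (x1 + x2 + x3)) + (x1 * x2 + x2 * x3 + x3 * x1) - (x1 + x2 + x3) + 1

theorem clauseQ_one (x1 x2 x3 : ℤ) :
    clauseQ x1 x2 x3 1 = clauseQ x1 x2 x3 0 + (2 - (x1 + x2 + x3)) := by
  unfold clauseQ
  ring

theorem two_mul_clauseQ_zero_of_mul_self {x1 x2 x3 : ℤ}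
    (h1 : x1 * x1 = x1) (h2 : x2 * x2 = x2) (h3 : x3 * x3 = x3) :
    2 * clauseQ x1 x2 x3 0 = (x1 + x2 + x3 - 1) * (x1 + x2 + x3 - 2) := by
  unfold clauseQ
  linear_combination -(h1 + h2 + h3)

theorem min_add_two_sub_eq_ite {q s : ℤ} (hq : 2 * q = (s - 1) * (s - 2))
    (hs₀ : 0 ≤ s) (hs₃ : s ≤ 3) :
    min q (q + (2 - s)) = if s = 0 then 1 else 0 := by
  interval_cases s <;> omega

/-- For Boolean `x1, x2, x3 ∈ {0,1}`, the minimum of the clause-encoding function over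
`xc ∈ {0,1}` equals `0` if the clause is satisfied (some literal value is 1, i.e.
`x1 + x2 + x3 ≥ 1`), and equals `1` if the clause is unsatisfied (`x1 = x2 = x3 = 0`). -/
theorem clauseQ_min (x1 x2 x3 : ℤ)
    (h1 : x1 = 0 ∨ x1 = 1) (h2 : x2 = 0 ∨ x2 = 1) (h3 : x3 = 0 ∨ x3 = 1) :
    (1 ≤ x1 + x2 + x3 →
      min (clauseQ x1 x2 x3 0) (clauseQ x1 x2 x3 1) = 0) ∧
    (x1 = 0 ∧ x2 = 0 ∧ x3 = 0 →
      min (clauseQ x1 x2 x3 0) (clauseQ x1 x2 x3 1) = 1) := by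
  have idem : ∀ x : ℤ, x = 0 ∨ x = 1 → x * x = x := by rintro x (rfl | rfl) <;> rfl
  have hQ₀ := two_mul_clauseQ_zero_of_mul_self (idem x1 h1) (idem x2 h2) (idem x3 h3)
  rw [clauseQ_one, min_add_two_sub_eq_ite hQ₀ (by omega) (by omega)]
  constructor
  · intro hs
    exact if_neg (by omega)
  · rintro ⟨rfl, rfl, rfl⟩
    rfl
end

section
/- Let φ be a 3-CNF formula with m clauses over n Boolean variables, where under an assignment x ∈ {0,1}^n the k-th clause has literal values l_{k,1}(x), l_{k,2}(x), l_{k,3}(x) ∈ {0,1}. Then for every fixed assignment x, the minimum over auxiliary values a ∈ {0,1}^m of the total encoding Q(φ)(x, a) = ∑_{k=1}^m Q(l_{k,1}(x), l_{k,2}(x), l_{k,3}(x), a_k) equals the number of clauses of φ that are unsatisfied by x. -/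
/-- A vector is Boolean when every coordinate is 0 or 1. -/
def BoolVec {n : ℕ} (x : Fin n → ℤ) : Prop := ∀ i, x i = 0 ∨ x i = 1

/-- A literal over `n` variables: a variable index together with a polarity
(`true` = positive literal, `false` = negated literal). -/
abbrev Literal (n : ℕ) := Fin n × Bool

/-- The value of a literal under an assignment: the coordinate `x j` for a positive
literal, and the Boolean negation `1 - x j` for a negated literal. -/
def litVal {n : ℕ} (l : Literal n) (x : Fin n → ℤ) : ℤ :=
  if l.2 then x l.1 else 1 - x l.1

/-- A 3-SAT clause: a triple of literals. -/
abbrev Clause3 (n : ℕ) := Literal n × Literal n × Literal n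

/-- A clause is satisfied exactly when at least one of its literal values equals 1. -/
def clauseSat {n : ℕ} (c : Clause3 n) (x : Fin n → ℤ) : Prop :=
  litVal c.1 x = 1 ∨ litVal c.2.1 x = 1 ∨ litVal c.2.2 x = 1

instance {n : ℕ} (c : Clause3 n) (x : Fin n → ℤ) : Decidable (clauseSat c x) := by
  unfold clauseSat; infer_instance

/-- An assignment satisfies a 3-CNF formula when it satisfies every clause. -/
def SatCNF {n m : ℕ} (φ : Fin m → Clause3 n) (x : Fin n → ℤ) : Prop :=
  ∀ k, clauseSat (φ k) x

/-- The total encoding `Q(φ)(x, a) = ∑ₖ Q(l_{k,1}(x), l_{k,2}(x), l_{k,3}(x), aₖ)`. -/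
def Qtot {n m : ℕ} (φ : Fin m → Clause3 n) (x : Fin n → ℤ) (a : Fin m → ℤ) : ℤ :=
  ∑ k, clauseQ (litVal (φ k).1 x) (litVal (φ k).2.1 x) (litVal (φ k).2.2 x) (a k)

/-! The auxiliary bit `a_k = l₁ l₂ l₃` is optimal: on Boolean inputs `Q(l₁,l₂,l₃,l₁l₂l₃)`
equals the unsatisfied-indicator `(1 - l₁)(1 - l₂)(1 - l₃)`, and a case check shows that no
Boolean `a_k` does better. Summing over the clauses gives the claim. -/

section BooleanIntegers

variable {b₁ b₂ b₃ : ℤ}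

lemma one_sub_mul_one_sub_mul_one_sub_eq_ite (h₁ : b₁ = 0 ∨ b₁ = 1) (h₂ : b₂ = 0 ∨ b₂ = 1)
    (h₃ : b₃ = 0 ∨ b₃ = 1) :
    (1 - b₁) * (1 - b₂) * (1 - b₃) = if b₁ = 1 ∨ b₂ = 1 ∨ b₃ = 1 then 0 else 1 := by
  rcases h₁ with rfl | rfl <;> rcases h₂ with rfl | rfl <;> rcases h₃ with rfl | rfl <;> simp

lemma one_sub_mul_one_sub_mul_one_sub_le_clauseQ {c : ℤ} (h₁ : b₁ = 0 ∨ b₁ = 1)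
    (h₂ : b₂ = 0 ∨ b₂ = 1) (h₃ : b₃ = 0 ∨ b₃ = 1) (hc : c = 0 ∨ c = 1) :
    (1 - b₁) * (1 - b₂) * (1 - b₃) ≤ clauseQ b₁ b₂ b₃ c := by
  rcases h₁ with rfl | rfl <;> rcases h₂ with rfl | rfl <;> rcases h₃ with rfl | rfl <;>
    rcases hc with rfl | rfl <;> norm_num [clauseQ]

lemma clauseQ_mul_mul_eq (h₁ : b₁ = 0 ∨ b₁ = 1) (h₂ : b₂ = 0 ∨ b₂ = 1)
    (h₃ : b₃ = 0 ∨ b₃ = 1) :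
    clauseQ b₁ b₂ b₃ (b₁ * b₂ * b₃) = (1 - b₁) * (1 - b₂) * (1 - b₃) := by
  rcases h₁ with rfl | rfl <;> rcases h₂ with rfl | rfl <;> rcases h₃ with rfl | rfl <;>
    norm_num [clauseQ]

lemma mul_mul_eq_zero_or_one (h₁ : b₁ = 0 ∨ b₁ = 1) (h₂ : b₂ = 0 ∨ b₂ = 1)
    (h₃ : b₃ = 0 ∨ b₃ = 1) : b₁ * b₂ * b₃ = 0 ∨ b₁ * b₂ * b₃ = 1 := by
  rcases h₁ with rfl | rfl <;> rcases h₂ with rfl | rfl <;> rcases h₃ with rfl | rfl <;> simp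

end BooleanIntegers

lemma litVal_eq_zero_or_one {n : ℕ} (l : Literal n) {x : Fin n → ℤ} (hx : BoolVec x) :
    litVal l x = 0 ∨ litVal l x = 1 := by
  unfold litVal
  rcases hx l.1 with h | h <;> cases l.2 <;> simp [h]

section Clause

variable {n : ℕ} (c : Clause3 n) (x : Fin n → ℤ)

def clauseWitness : ℤ := litVal c.1 x * litVal c.2.1 x * litVal c.2.2 x

def clauseUnsat : ℤ := (1 - litVal c.1 x) * (1 - litVal c.2.1 x) * (1 - litVal c.2.2 x)

variable {x} (hx : BoolVec x)
include hx

lemma clauseWitness_eq_zero_or_one : clauseWitness c x = 0 ∨ clauseWitness c x = 1 :=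
  mul_mul_eq_zero_or_one (litVal_eq_zero_or_one _ hx) (litVal_eq_zero_or_one _ hx)
    (litVal_eq_zero_or_one _ hx)

lemma clauseUnsat_eq_ite : clauseUnsat c x = if clauseSat c x then 0 else 1 :=
  one_sub_mul_one_sub_mul_one_sub_eq_ite (litVal_eq_zero_or_one _ hx)
    (litVal_eq_zero_or_one _ hx) (litVal_eq_zero_or_one _ hx)

lemma clauseQ_clauseWitness :
    clauseQ (litVal c.1 x) (litVal c.2.1 x) (litVal c.2.2 x) (clauseWitness c x) =
      clauseUnsat c x :=
  clauseQ_mul_mul_eq (litVal_eq_zero_or_one _ hx) (litVal_eq_zero_or_one _ hx)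
    (litVal_eq_zero_or_one _ hx)

lemma clauseUnsat_le_clauseQ {a : ℤ} (ha : a = 0 ∨ a = 1) :
    clauseUnsat c x ≤ clauseQ (litVal c.1 x) (litVal c.2.1 x) (litVal c.2.2 x) a :=
  one_sub_mul_one_sub_mul_one_sub_le_clauseQ (litVal_eq_zero_or_one _ hx)
    (litVal_eq_zero_or_one _ hx) (litVal_eq_zero_or_one _ hx) ha

end Clause

/-- For every fixed Boolean assignment `x`, the minimum over Boolean auxiliary vectors
`a ∈ {0,1}^m` of the total encoding `Q(φ)(x, a)` equals the number of clauses of `φ`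
unsatisfied by `x`. -/
theorem Qtot_min_eq_unsat_count {n m : ℕ} (φ : Fin m → Clause3 n)
    (x : Fin n → ℤ) (hx : BoolVec x) :
    IsLeast {v : ℤ | ∃ a : Fin m → ℤ, BoolVec a ∧ Qtot φ x a = v}
      ((Finset.univ.filter fun k => ¬ clauseSat (φ k) x).card : ℤ) := by
  have hcount : ((Finset.univ.filter fun k => ¬ clauseSat (φ k) x).card : ℤ) =
      ∑ k, clauseUnsat (φ k) x := by
    rw [Finset.natCast_card_filter]
    refine Finset.sum_congr rfl fun k _ => ?_
    rw [clauseUnsat_eq_ite _ hx]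
    split_ifs <;> simp_all
  rw [hcount]
  refine ⟨⟨fun k => clauseWitness (φ k) x, fun k => clauseWitness_eq_zero_or_one _ hx,
    Finset.sum_congr rfl fun k _ => clauseQ_clauseWitness _ hx⟩, ?_⟩
  rintro v ⟨a, ha, rfl⟩
  exact Finset.sum_le_sum fun k _ => clauseUnsat_le_clauseQ _ hx (ha k)
end

section
/- Let φ be a satisfiable 3-CNF formula with m clauses over n Boolean variables, and let Q(φ)(x, a) = ∑_{k=1}^m Q(l_{k,1}(x), l_{k,2}(x), l_{k,3}(x), a_k) be its total encoding over (x, a) ∈ {0,1}^n × {0,1}^m. Then an assignment x ∈ {0,1}^n satisfies φ if and only if there exists a ∈ {0,1}^m with Q(φ)(x, a) = 0; consequently, the projection onto the x-coordinates of the set of global minimizers of Q(φ) is exactly the set of satisfying assignments of φ. -/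
/-- A global minimizer of `Q(φ)` over `{0,1}^n × {0,1}^m`. -/
def GlobalMin {n m : ℕ} (φ : Fin m → Clause3 n) (x : Fin n → ℤ) (a : Fin m → ℤ) : Prop :=
  BoolVec x ∧ BoolVec a ∧
    ∀ (x' : Fin n → ℤ) (a' : Fin m → ℤ), BoolVec x' → BoolVec a' →
      Qtot φ x a ≤ Qtot φ x' a'

/-!
For Boolean inputs with `s = x1 + x2 + x3` the pairwise sum `x1·x2 + x2·x3 + x3·x1` equals
`s(s-1)/2`, so `Q = xc·(2 - s) + (s-1)(s-2)/2`. This is nonnegative, and it vanishes for a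
suitable Boolean `xc` exactly when `s ≥ 1` (take `xc = 0` for `s ∈ {1, 2}` and `xc = 1` for
`s = 3`). Summing over the clauses, `Q(φ) ≥ 0` on the Boolean cube and `Q(φ)(x, ·)` has a Boolean
zero iff `x` satisfies `φ`. Since `φ` is satisfiable, the minimum of `Q(φ)` is `0`, so the global
minimizers are exactly its Boolean zeros.
-/

section Clause

variable {x1 x2 x3 : ℤ}

theorem clauseQ_nonneg (h1 : x1 = 0 ∨ x1 = 1) (h2 : x2 = 0 ∨ x2 = 1) (h3 : x3 = 0 ∨ x3 = 1)
    {xc : ℤ} (hc : xc = 0 ∨ xc = 1) : 0 ≤ clauseQ x1 x2 x3 xc := by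
  rcases h1 with rfl | rfl <;> rcases h2 with rfl | rfl <;> rcases h3 with rfl | rfl <;>
    rcases hc with rfl | rfl <;> norm_num [clauseQ]

theorem exists_clauseQ_eq_zero_iff (h1 : x1 = 0 ∨ x1 = 1) (h2 : x2 = 0 ∨ x2 = 1)
    (h3 : x3 = 0 ∨ x3 = 1) :
    (∃ xc : ℤ, (xc = 0 ∨ xc = 1) ∧ clauseQ x1 x2 x3 xc = 0) ↔ x1 = 1 ∨ x2 = 1 ∨ x3 = 1 := by
  simp only [or_and_right, exists_or, exists_eq_left]
  rcases h1 with rfl | rfl <;> rcases h2 with rfl | rfl <;> rcases h3 with rfl | rfl <;>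
    norm_num [clauseQ]

end Clause

section Formula

variable {n m : ℕ} {x : Fin n → ℤ}

theorem litVal_eq_zero_or_eq_one (l : Literal n) (hx : BoolVec x) :
    litVal l x = 0 ∨ litVal l x = 1 := by
  unfold litVal
  rcases hx l.1 with h | h <;> cases l.2 <;> simp [h]

theorem clauseSat_iff_exists_clauseQ_eq_zero (c : Clause3 n) (hx : BoolVec x) :
    clauseSat c x ↔ ∃ xc : ℤ, (xc = 0 ∨ xc = 1) ∧
      clauseQ (litVal c.1 x) (litVal c.2.1 x) (litVal c.2.2 x) xc = 0 :=
  (exists_clauseQ_eq_zero_iff (litVal_eq_zero_or_eq_one _ hx) (litVal_eq_zero_or_eq_one _ hx)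
    (litVal_eq_zero_or_eq_one _ hx)).symm

theorem Qtot_nonneg (φ : Fin m → Clause3 n) {a : Fin m → ℤ} (hx : BoolVec x) (ha : BoolVec a) :
    0 ≤ Qtot φ x a :=
  Finset.sum_nonneg fun k _ => clauseQ_nonneg (litVal_eq_zero_or_eq_one _ hx)
    (litVal_eq_zero_or_eq_one _ hx) (litVal_eq_zero_or_eq_one _ hx) (ha k)

theorem Qtot_eq_zero_iff (φ : Fin m → Clause3 n) {a : Fin m → ℤ} (hx : BoolVec x)
    (ha : BoolVec a) :
    Qtot φ x a = 0 ↔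
      ∀ k, clauseQ (litVal (φ k).1 x) (litVal (φ k).2.1 x) (litVal (φ k).2.2 x) (a k) = 0 := by
  rw [Qtot, Finset.sum_eq_zero_iff_of_nonneg fun k _ => clauseQ_nonneg
    (litVal_eq_zero_or_eq_one _ hx) (litVal_eq_zero_or_eq_one _ hx)
    (litVal_eq_zero_or_eq_one _ hx) (ha k)]
  simp only [Finset.mem_univ, true_implies]

theorem satCNF_iff_exists_Qtot_eq_zero (φ : Fin m → Clause3 n) (hx : BoolVec x) :
    SatCNF φ x ↔ ∃ a : Fin m → ℤ, BoolVec a ∧ Qtot φ x a = 0 := by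
  constructor
  · intro hsat
    choose a ha hzero using fun k => (clauseSat_iff_exists_clauseQ_eq_zero (φ k) hx).mp (hsat k)
    exact ⟨a, ha, (Qtot_eq_zero_iff φ hx ha).mpr hzero⟩
  · rintro ⟨a, ha, hzero⟩ k
    exact (clauseSat_iff_exists_clauseQ_eq_zero (φ k) hx).mpr
      ⟨a k, ha k, (Qtot_eq_zero_iff φ hx ha).mp hzero k⟩

theorem globalMin_iff_Qtot_eq_zero {φ : Fin m → Clause3 n} {a : Fin m → ℤ}
    (hzero : ∃ x₀ a₀, BoolVec x₀ ∧ BoolVec a₀ ∧ Qtot φ x₀ a₀ = 0) :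
    GlobalMin φ x a ↔ BoolVec x ∧ BoolVec a ∧ Qtot φ x a = 0 := by
  obtain ⟨x₀, a₀, hx₀, ha₀, hQ₀⟩ := hzero
  constructor
  · rintro ⟨hx, ha, hmin⟩
    exact ⟨hx, ha, le_antisymm (hQ₀ ▸ hmin x₀ a₀ hx₀ ha₀) (Qtot_nonneg φ hx ha)⟩
  · rintro ⟨hx, ha, hQ⟩
    exact ⟨hx, ha, fun x' a' hx' ha' => hQ ▸ Qtot_nonneg φ hx' ha'⟩

end Formula

/-- For a satisfiable 3-CNF formula `φ`: a Boolean assignment `x` satisfies `φ` iff some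
Boolean auxiliary vector `a` gives `Q(φ)(x, a) = 0`; consequently the projection onto
the `x`-coordinates of the set of global minimizers of `Q(φ)` is exactly the set of
satisfying assignments of `φ`. -/
theorem sat_iff_Qtot_zero_and_projection {n m : ℕ} (φ : Fin m → Clause3 n)
    (hsat : ∃ x : Fin n → ℤ, BoolVec x ∧ SatCNF φ x) :
    (∀ x : Fin n → ℤ, BoolVec x →
      (SatCNF φ x ↔ ∃ a : Fin m → ℤ, BoolVec a ∧ Qtot φ x a = 0)) ∧
    {x : Fin n → ℤ | ∃ a : Fin m → ℤ, GlobalMin φ x a}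
      = {x : Fin n → ℤ | BoolVec x ∧ SatCNF φ x} := by
  have hsat_iff : ∀ x : Fin n → ℤ, BoolVec x →
      (SatCNF φ x ↔ ∃ a : Fin m → ℤ, BoolVec a ∧ Qtot φ x a = 0) :=
    fun x hx => satCNF_iff_exists_Qtot_eq_zero φ hx
  have hzero : ∃ x₀ a₀, BoolVec x₀ ∧ BoolVec a₀ ∧ Qtot φ x₀ a₀ = 0 := by
    obtain ⟨x₀, hx₀, hs₀⟩ := hsat
    obtain ⟨a₀, ha₀, hQ₀⟩ := (hsat_iff x₀ hx₀).mp hs₀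
    exact ⟨x₀, a₀, hx₀, ha₀, hQ₀⟩
  refine ⟨hsat_iff, Set.ext fun x => ?_⟩
  simp only [Set.mem_ofPred_eq, globalMin_iff_Qtot_eq_zero hzero]
  constructor
  · rintro ⟨a, hx, ha, hQ⟩
    exact ⟨hx, (hsat_iff x hx).mpr ⟨a, ha, hQ⟩⟩
  · rintro ⟨hx, hs⟩
    obtain ⟨a, ha, hQ⟩ := (hsat_iff x hx).mp hs
    exact ⟨a, hx, ha, hQ⟩
end

section
/- Let H be an Ising Hamiltonian on n spins with couplings J and fields h, fix distinct indices i, j, and let H_M be the merged Hamiltonian on n−1 spins obtained by deleting spin j, adding J_{jk} to the coupling J_{ik} for every k ∉ {i, j}, and adding h_j to the field h_i. If every ground state s of H satisfies s_i = s_j, then min H_M = min H + J_{ij}, and the map sending a configuration s' on the remaining n−1 spins to its extension with s_j := s_i is a bijection from the ground states of H_M onto the ground states of H. -/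
open Finset

/-- The Ising Hamiltonian `H(s) = −∑_{k<l} J_{kl} s_k s_l − ∑_k h_k s_k` on a finite,
linearly ordered index set of spins. -/
def ising {ι : Type*} [Fintype ι] [LinearOrder ι]
    (J : ι → ι → ℝ) (h : ι → ℝ) (s : ι → ℝ) : ℝ :=
  -(∑ k, ∑ l, if k < l then J k l * s k * s l else 0) - ∑ k, h k * s k

/-- A spin configuration: every coordinate is `1` or `-1`. -/
def SpinVec {ι : Type*} (s : ι → ℝ) : Prop := ∀ i, s i = 1 ∨ s i = -1

/-- A ground state: a spin configuration minimizing the Ising energy. -/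
def GroundState {ι : Type*} [Fintype ι] [LinearOrder ι]
    (J : ι → ι → ℝ) (h : ι → ℝ) (s : ι → ℝ) : Prop :=
  SpinVec s ∧ ∀ t : ι → ℝ, SpinVec t → ising J h s ≤ ising J h t

/-!
Extending a configuration `s'` of the merged system by `s_j := s_i` changes no pair term except
the one of `{i, j}`, which in `H` contributes `-J_ij s_i s_j = -J_ij`; the fields `h_i + h_j`
of `H_M` are exactly `h_i s_i + h_j s_j`. So `H_M(s') = H(ext s') + J_ij`. Alignment says that
every ground state of `H` is the extension of its own restriction, so minimizing `H_M` and
minimizing `H` are the same problem up to the constant `J_ij`.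
-/

section OffDiagonal

variable {ι M : Type*} [Fintype ι] [AddCommMonoid M]

theorem sum_sum_ite_ne_eq_two_nsmul [LinearOrder ι] [DecidableEq ι] {f : ι → ι → M}
    (hf : ∀ k l, f k l = f l k) :
    ∑ k, ∑ l, (if k ≠ l then f k l else 0) = 2 • ∑ k, ∑ l, if k < l then f k l else 0 := by
  have hsplit : ∀ k l, (if k ≠ l then f k l else 0) =
      (if k < l then f k l else 0) + if l < k then f l k else 0 := by
    intro k l
    rcases lt_trichotomy k l with hkl | rfl | hkl
    · simp [hkl, hkl.ne, hkl.not_gt]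
    · simp
    · simp [hkl, hkl.ne', hkl.not_gt, hf k l]
  simp only [hsplit, sum_add_distrib, two_nsmul]
  rw [sum_comm (f := fun k l => if l < k then f l k else 0)]

theorem sum_sum_ite_ne_eq_add_sum_subtype_ne [DecidableEq ι] (f : ι → ι → M) (a : ι) :
    ∑ k, ∑ l, (if k ≠ l then f k l else 0) =
      ∑ l : {l // l ≠ a}, f a l + ∑ k : {k // k ≠ a}, f k a +
        ∑ k : {k // k ≠ a}, ∑ l : {l // l ≠ a}, if k ≠ l then f k l else 0 := by
  simp only [Fintype.sum_eq_add_sum_subtype_ne _ a, ne_eq, not_true_eq_false, if_false,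
    zero_add, sum_add_distrib, Subtype.coe_inj]
  have hne : ∀ x : {l // l ≠ a}, (x : ι) ≠ a := Subtype.prop
  simp [hne, (hne _).symm, add_assoc]

end OffDiagonal

section Extend

variable {ι : Type*} [DecidableEq ι] {i j : ι}

def mergeCouplings (J : ι → ι → ℝ) (i j : ι) (k l : {k // k ≠ j}) : ℝ :=
  if (k : ι) = i then J k l + J j l else if (l : ι) = i then J k l + J k j else J k l

def mergeFields (h : ι → ℝ) (i j : ι) (k : {k // k ≠ j}) : ℝ :=
  if (k : ι) = i then h i + h j else h k

def extendSpin (hij : i ≠ j) (s' : {k // k ≠ j} → ℝ) (k : ι) : ℝ :=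
  if hk : k = j then s' ⟨i, hij⟩ else s' ⟨k, hk⟩

variable (hij : i ≠ j)

@[simp]
theorem extendSpin_coe (s' : {k // k ≠ j} → ℝ) (k : {k // k ≠ j}) :
    extendSpin hij s' k = s' k := by
  simp [extendSpin, k.2]

theorem extendSpin_restrict {s : ι → ℝ} (hs : s i = s j) :
    extendSpin hij (fun k => s k) = s := by
  ext k
  by_cases hk : k = j
  · subst hk; simp [extendSpin, hs]
  · simp [extendSpin, hk]

theorem extendSpin_injective : Function.Injective (extendSpin hij) := fun s₁ s₂ heq =>
  funext fun k => by simpa using congrFun heq k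

theorem SpinVec.extendSpin {s' : {k // k ≠ j} → ℝ} (hs' : SpinVec s') :
    SpinVec (extendSpin hij s') := fun k => by
  unfold _root_.extendSpin; split <;> apply hs'

theorem mergeCouplings_symm {J : ι → ι → ℝ} (hJ : ∀ k l, J k l = J l k) (k l : {k // k ≠ j}) :
    mergeCouplings J i j k l = mergeCouplings J i j l k := by
  unfold mergeCouplings
  split_ifs <;> simp_all

theorem sum_sum_ite_ne_mergeCouplings [Fintype ι] (J : ι → ι → ℝ) (s' : {k // k ≠ j} → ℝ) :
    ∑ k, ∑ l, (if k ≠ l then mergeCouplings J i j k l * s' k * s' l else 0) =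
      ∑ k : {k // k ≠ j}, ∑ l : {k // k ≠ j}, (if k ≠ l then J k l * s' k * s' l else 0) +
        ∑ l : {l // l ≠ (⟨i, hij⟩ : {k // k ≠ j})}, J j l * s' ⟨i, hij⟩ * s' l +
        ∑ k : {k // k ≠ (⟨i, hij⟩ : {k // k ≠ j})}, J k j * s' k * s' ⟨i, hij⟩ := by
  simp only [sum_sum_ite_ne_eq_add_sum_subtype_ne _ (⟨i, hij⟩ : {k // k ≠ j})]
  have hne : ∀ k : {k : {k // k ≠ j} // k ≠ ⟨i, hij⟩}, (k : ι) ≠ i := fun k hk =>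
    k.2 (Subtype.ext hk)
  simp only [mergeCouplings, hne, if_true, if_false, add_mul, sum_add_distrib]
  ring

end Extend

section Energy

variable {ι : Type*} [Fintype ι] [LinearOrder ι] {J : ι → ι → ℝ} {i j : ι}

/- `DecidableEq ι` is a parameter so that on a subtype the off-diagonal sum uses
`Subtype.instDecidableEq`, as elaborated sums do, not the instance of `Subtype.instLinearOrder`. -/
theorem two_mul_ising [DecidableEq ι] (hJ : ∀ k l, J k l = J l k) (h s : ι → ℝ) :
    2 * ising J h s =
      -(∑ k, ∑ l, if k ≠ l then J k l * s k * s l else 0) - 2 * ∑ k, h k * s k := by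
  rw [sum_sum_ite_ne_eq_two_nsmul (f := fun k l => J k l * s k * s l)
    fun k l => by rw [hJ]; ring, ising, nsmul_eq_mul]
  push_cast
  ring

theorem ising_merge_extendSpin (hij : i ≠ j) (hJ : ∀ k l, J k l = J l k) (h : ι → ℝ)
    {s' : {k // k ≠ j} → ℝ} (hs' : SpinVec s') :
    ising (mergeCouplings J i j) (mergeFields h i j) s' =
      ising J h (extendSpin hij s') + J i j := by
  have hcouplings := sum_sum_ite_ne_mergeCouplings hij J s'
  set i' : {k // k ≠ j} := ⟨i, hij⟩
  have hi' : (i' : ι) = i := rfl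
  have hsq : s' i' * s' i' = 1 := by rcases hs' i' with h1 | h1 <;> simp [h1]
  have hji_sq : J j i * s' i' * s' i' = J i j := by rw [mul_assoc, hsq, mul_one, hJ]
  have hij_sq : J i j * s' i' * s' i' = J i j := by rw [mul_assoc, hsq, mul_one]
  have hext_j : extendSpin hij s' j = s' i' := by simp [extendSpin, i']
  have hext_i : extendSpin hij s' i = s' i' := extendSpin_coe hij s' i'
  have hsplit := sum_sum_ite_ne_eq_add_sum_subtype_ne
    (fun k l => J k l * extendSpin hij s' k * extendSpin hij s' l) j
  have hrow := Fintype.sum_eq_add_sum_subtype_ne (fun l : {k // k ≠ j} => J j l * s' i' * s' l) i'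
  have hcol := Fintype.sum_eq_add_sum_subtype_ne (fun k : {k // k ≠ j} => J k j * s' k * s' i') i'
  have hfields : ∑ k, mergeFields h i j k * s' k = ∑ k, h k * extendSpin hij s' k := by
    have hne : ∀ k : {k : {k // k ≠ j} // k ≠ i'}, (k : ι) ≠ i := fun k hk =>
      k.2 (Subtype.ext hk)
    rw [Fintype.sum_eq_add_sum_subtype_ne _ j, Fintype.sum_eq_add_sum_subtype_ne _ i',
      Fintype.sum_eq_add_sum_subtype_ne (fun k : {k // k ≠ j} => h k * extendSpin hij s' k) i']
    simp only [mergeFields, hi', hne, if_true, if_false, extendSpin_coe, hext_i, hext_j]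
    ring
  have h1 := two_mul_ising (J := mergeCouplings J i j) (mergeCouplings_symm hJ)
    (mergeFields h i j) s'
  have h2 := two_mul_ising hJ h (extendSpin hij s')
  simp only [extendSpin_coe, hext_j] at hsplit
  rw [hi'] at hrow hcol
  rw [hcouplings] at h1
  linarith

end Energy

section GroundState

variable {ι : Type*} [Fintype ι] [LinearOrder ι]

theorem exists_groundState (J : ι → ι → ℝ) (h : ι → ℝ) : ∃ s, GroundState J h s := by
  have hfin : {s : ι → ℝ | SpinVec s}.Finite := Set.Finite.pi' fun _ => Set.toFinite {1, -1}
  obtain ⟨s, hs, hmin⟩ :=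
    Set.exists_min_image _ (ising J h) hfin ⟨fun _ => 1, fun _ => Or.inl rfl⟩
  exact ⟨s, hs, hmin⟩

variable {J : ι → ι → ℝ} {h : ι → ℝ}

theorem GroundState.isLeast {s : ι → ℝ} (hs : GroundState J h s) :
    IsLeast {E | ∃ t, SpinVec t ∧ ising J h t = E} (ising J h s) :=
  ⟨⟨s, hs.1, rfl⟩, by rintro _ ⟨t, ht, rfl⟩; exact hs.2 t ht⟩

theorem groundState_merge_iff {i j : ι} (hij : i ≠ j) (hJ : ∀ k l, J k l = J l k)
    (haligned : ∀ s, GroundState J h s → s i = s j) (s' : {k // k ≠ j} → ℝ) :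
    GroundState (mergeCouplings J i j) (mergeFields h i j) s' ↔
      GroundState J h (extendSpin hij s') := by
  constructor
  · rintro ⟨hs', hmin⟩
    refine ⟨hs'.extendSpin hij, fun t ht => ?_⟩
    obtain ⟨s₀, hs₀⟩ := exists_groundState J h
    have hle := hmin (fun k => s₀ k) fun k => hs₀.1 k
    rw [ising_merge_extendSpin hij hJ h hs', ising_merge_extendSpin hij hJ h fun k => hs₀.1 k,
      extendSpin_restrict hij (haligned s₀ hs₀)] at hle
    linarith [hs₀.2 t ht]
  · rintro ⟨hs, hmin⟩
    have hs' : SpinVec s' := fun k => by simpa using hs k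
    refine ⟨hs', fun t ht => ?_⟩
    rw [ising_merge_extendSpin hij hJ h hs', ising_merge_extendSpin hij hJ h ht]
    linarith [hmin _ (ht.extendSpin hij)]

end GroundState

/-- If every ground state of `H` has `s_i = s_j` (the edge `(i,j)` is aligned), then the
merged Hamiltonian `H_M` (delete spin `j`, add `J_{jk}` to `J_{ik}` for `k ∉ {i,j}`,
add `h_j` to `h_i`) satisfies `min H_M = min H + J_{ij}`, and extending a configuration
on the remaining spins by `s_j := s_i` is a bijection from the ground states of `H_M`
onto the ground states of `H`. -/
theorem ising_merge_groundStates {n : ℕ} (J : Fin n → Fin n → ℝ) (h : Fin n → ℝ)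
    (hJsymm : ∀ k l, J k l = J l k)
    (i j : Fin n) (hij : i ≠ j)
    (J' : {k : Fin n // k ≠ j} → {k : Fin n // k ≠ j} → ℝ)
    (h' : {k : Fin n // k ≠ j} → ℝ)
    (hJ' : ∀ k l : {k : Fin n // k ≠ j},
      J' k l = if (k : Fin n) = i then J k l + J j l
               else if (l : Fin n) = i then J k l + J k j
               else J k l)
    (hh' : ∀ k : {k : Fin n // k ≠ j},
      h' k = if (k : Fin n) = i then h i + h j else h k)
    (haligned : ∀ s : Fin n → ℝ, GroundState J h s → s i = s j) :
    sInf {E : ℝ | ∃ s' : {k : Fin n // k ≠ j} → ℝ, SpinVec s' ∧ ising J' h' s' = E}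
      = sInf {E : ℝ | ∃ s : Fin n → ℝ, SpinVec s ∧ ising J h s = E} + J i j ∧
    Set.BijOn
      (fun (s' : {k : Fin n // k ≠ j} → ℝ) (k : Fin n) =>
        if hk : k = j then s' ⟨i, hij⟩ else s' ⟨k, hk⟩)
      {s' | GroundState J' h' s'} {s | GroundState J h s} := by
  obtain rfl : J' = mergeCouplings J i j := funext₂ hJ'
  obtain rfl : h' = mergeFields h i j := funext hh'
  have hmerge := groundState_merge_iff hij hJsymm haligned
  have hrestrict {s} (hs : GroundState J h s) : extendSpin hij (fun k => s k) = s :=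
    extendSpin_restrict hij (haligned s hs)
  obtain ⟨s₀, hs₀⟩ := exists_groundState J h
  have hr₀ := (hmerge fun k => s₀ k).2 (by rwa [hrestrict hs₀])
  refine ⟨?_, fun s' hs' => (hmerge s').1 hs', (extendSpin_injective hij).injOn,
    fun s hs => ⟨fun k => s k, (hmerge _).2 (by rwa [hrestrict hs]), hrestrict hs⟩⟩
  rw [hr₀.isLeast.csInf_eq, hs₀.isLeast.csInf_eq, ising_merge_extendSpin hij hJsymm h hr₀.1,
    hrestrict hs₀]
end

section
/- Let H be an Ising Hamiltonian on n spins with couplings J and fields h, fix distinct indices i, j, and let H_FM be the flip-merged Hamiltonian on n−1 spins obtained by deleting spin j, setting the coupling between i and each k ∉ {i, j} to J_{ik} − J_{jk}, and setting the field at i to h_i − h_j (all other couplings and fields unchanged). If every ground state s of H satisfies s_i = −s_j, then min H_FM = min H − J_{ij}, and the map sending a configuration s' on the remaining n−1 spins to its extension with s_j := −s_i is a bijection from the ground states of H_FM onto the ground states of H. -/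
open Finset

/-! Splitting off spin `j`, and then comparing the couplings of spin `i` before and after the
merge, shows that extending a configuration `s'` of the remaining spins by `s_j := -s_i` gives
`H(s) = H_FM(s') + J_{ij} s_i² = H_FM(s') + J_{ij}`. Every ground state of `H` is such an extension,
so minimizing `H` is the same as minimizing `H_FM`; this gives both the shift of the minimum and
the bijection between ground states. -/

theorem finite_setOf_spinVec {ι : Type*} [Finite ι] : {s : ι → ℝ | SpinVec s}.Finite :=
  (Set.Finite.pi fun _ => (Set.finite_singleton (-1 : ℝ)).insert 1).subset
    fun _ hs k _ => hs k

section Energy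

variable {ι : Type*} [Fintype ι] [LinearOrder ι]

theorem GroundState.sInf_energy_eq {J : ι → ι → ℝ} {h : ι → ℝ} {s : ι → ℝ}
    (hs : GroundState J h s) :
    sInf {E : ℝ | ∃ t : ι → ℝ, SpinVec t ∧ ising J h t = E} = ising J h s :=
  IsLeast.csInf_eq ⟨⟨s, hs.1, rfl⟩, fun _ ⟨t, ht, hE⟩ => hE ▸ hs.2 t ht⟩

theorem ising_eq_ising_subtype_ne_sub {J : ι → ι → ℝ} (hJ : ∀ k l, J k l = J l k)
    (h s : ι → ℝ) (j : ι) :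
    ising J h s = ising (fun k l : {k // k ≠ j} => J k l) (fun k => h k) (fun k => s k)
      - s j * (∑ l : {l // l ≠ j}, J j l * s l + h j) := by
  have hpair : ∀ l : {l // l ≠ j}, ((if j < l then J j l * s j * s l else 0)
      + if (l : ι) < j then J l j * s l * s j else 0) = J j l * s j * s l := by
    intro l
    rcases lt_or_gt_of_ne l.2 with hl | hl
    · simp [hl, hl.not_gt, hJ l j]; ring
    · simp [hl, hl.not_gt]
  unfold ising
  rw [Fintype.sum_eq_add_sum_subtype_ne _ j, Fintype.sum_eq_add_sum_subtype_ne _ j,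
    Fintype.sum_eq_add_sum_subtype_ne (fun k => h k * s k) j]
  simp only [Fintype.sum_eq_add_sum_subtype_ne (fun l => if _ < l then _ else _) j,
    Finset.sum_add_distrib, lt_irrefl, if_false, Subtype.coe_lt_coe]
  have hcross :
      ∑ l : {l // l ≠ j}, J j l * s j * s l = s j * ∑ l : {l // l ≠ j}, J j l * s l := by
    rw [Finset.mul_sum]; exact Finset.sum_congr rfl fun _ _ => by ring
  rw [← Finset.sum_congr rfl fun l _ => hpair l, Finset.sum_add_distrib] at hcross
  linear_combination (-1 : ℝ) * hcross

-- `ising` never reads the diagonal of the coupling, hence the correction for `l = i`.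
theorem ising_eq_ising_sub_of_agree_off {J K : ι → ι → ℝ} (hJ : ∀ k l, J k l = J l k)
    (hK : ∀ k l, K k l = K l k) {h g : ι → ℝ} {i : ι}
    (hKJ : ∀ k l, k ≠ i → l ≠ i → K k l = J k l) (hgh : ∀ k, k ≠ i → g k = h k) (s : ι → ℝ) :
    ising K g s = ising J h s
      - s i * (∑ l, (K i l - J i l) * s l - (K i i - J i i) * s i + (g i - h i)) := by
  have hrestrict : (fun k l : {k // k ≠ i} => K k l) = fun k l : {k // k ≠ i} => J k l :=
    funext₂ fun k l => hKJ k l k.2 l.2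
  have hrestrict' : (fun k : {k // k ≠ i} => g k) = fun k : {k // k ≠ i} => h k :=
    funext fun k => hgh k k.2
  rw [ising_eq_ising_subtype_ne_sub hK, ising_eq_ising_subtype_ne_sub hJ _ _ i, hrestrict,
    hrestrict', Fintype.sum_eq_add_sum_subtype_ne _ i]
  simp only [sub_mul, Finset.sum_sub_distrib]
  ring

end Energy

section FlipMerge

variable {ι : Type*} [DecidableEq ι]

def flipMergeCoupling (J : ι → ι → ℝ) (i j : ι) : {k // k ≠ j} → {k // k ≠ j} → ℝ :=
  fun k l => if (k : ι) = i then J k l - J j l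
    else if (l : ι) = i then J k l - J k j else J k l

def flipMergeField (h : ι → ℝ) (i j : ι) : {k // k ≠ j} → ℝ :=
  fun k => if (k : ι) = i then h i - h j else h k

def antiExtend {i j : ι} (hij : i ≠ j) (s' : {k // k ≠ j} → ℝ) : ι → ℝ :=
  fun k => if hk : k = j then -(s' ⟨i, hij⟩) else s' ⟨k, hk⟩

variable {i j : ι} (hij : i ≠ j)

@[simp]
theorem antiExtend_apply_coe (s' : {k // k ≠ j} → ℝ) (k : {k // k ≠ j}) :
    antiExtend hij s' k = s' k :=
  dif_neg k.2

@[simp]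
theorem antiExtend_apply_self (s' : {k // k ≠ j} → ℝ) :
    antiExtend hij s' j = -s' ⟨i, hij⟩ :=
  dif_pos rfl

theorem antiExtend_restrict {s : ι → ℝ} (hs : s j = -s i) :
    antiExtend hij (fun k => s k) = s := by
  funext k
  by_cases hk : k = j
  · subst hk; simp [hs]
  · exact antiExtend_apply_coe hij _ ⟨k, hk⟩

theorem antiExtend_injective : Function.Injective (antiExtend hij) :=
  fun s' t' hst => funext fun k => by
    simpa only [antiExtend_apply_coe] using congrFun hst k

theorem spinVec_antiExtend {s' : {k // k ≠ j} → ℝ} (hs' : SpinVec s') :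
    SpinVec (antiExtend hij s') := by
  intro k
  by_cases hk : k = j
  · subst hk; rcases hs' ⟨i, hij⟩ with h1 | h1 <;> simp [h1]
  · exact antiExtend_apply_coe hij s' ⟨k, hk⟩ ▸ hs' ⟨k, hk⟩

theorem flipMergeCoupling_symm {J : ι → ι → ℝ} (hJ : ∀ k l, J k l = J l k)
    (k l : {k // k ≠ j}) :
    flipMergeCoupling J i j k l = flipMergeCoupling J i j l k := by
  unfold flipMergeCoupling
  split_ifs with hk hl hl <;> simp_all

end FlipMerge

section Ising

variable {ι : Type*} [Fintype ι] [LinearOrder ι] {J : ι → ι → ℝ} {h : ι → ℝ} {i j : ι}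
  (hij : i ≠ j)

theorem ising_antiExtend (hJ : ∀ k l, J k l = J l k) (s' : {k // k ≠ j} → ℝ) :
    ising J h (antiExtend hij s')
      = ising (flipMergeCoupling J i j) (flipMergeField h i j) s' + J i j * s' ⟨i, hij⟩ ^ 2 := by
  have hoff : ∀ k : {k // k ≠ j}, k ≠ ⟨i, hij⟩ → (k : ι) ≠ i := fun k hk h => hk (Subtype.ext h)
  have hcoupling : ∀ k l : {k // k ≠ j}, k ≠ ⟨i, hij⟩ → l ≠ ⟨i, hij⟩ →
      flipMergeCoupling J i j k l = J k l := fun k l hk hl => by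
    simp [flipMergeCoupling, hoff k hk, hoff l hl]
  have hfield : ∀ k : {k // k ≠ j}, k ≠ ⟨i, hij⟩ → flipMergeField h i j k = h k := fun k hk => by
    simp [flipMergeField, hoff k hk]
  rw [ising_eq_ising_subtype_ne_sub hJ _ _ j, ising_eq_ising_sub_of_agree_off
    (fun k l : {k // k ≠ j} => hJ k l) (flipMergeCoupling_symm hJ) hcoupling hfield]
  simp only [antiExtend_apply_coe, antiExtend_apply_self, flipMergeCoupling, flipMergeField,
    if_true, sub_sub_cancel_left, neg_mul, Finset.sum_neg_distrib]
  linear_combination s' ⟨i, hij⟩ ^ 2 * hJ j i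

theorem ising_antiExtend_of_spinVec (hJ : ∀ k l, J k l = J l k) {s' : {k // k ≠ j} → ℝ}
    (hs' : SpinVec s') :
    ising J h (antiExtend hij s')
      = ising (flipMergeCoupling J i j) (flipMergeField h i j) s' + J i j := by
  rw [ising_antiExtend hij hJ]
  rcases hs' ⟨i, hij⟩ with hi | hi <;> simp [hi]

variable (hanti : ∀ s, GroundState J h s → s i = -s j)
include hij hanti

theorem antiExtend_restrict_of_groundState {s : ι → ℝ} (hs : GroundState J h s) :
    antiExtend hij (fun k => s k) = s :=
  antiExtend_restrict hij (by linarith [hanti s hs])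

theorem groundState_restrict (hJ : ∀ k l, J k l = J l k) {s : ι → ℝ} (hs : GroundState J h s) :
    GroundState (flipMergeCoupling J i j) (flipMergeField h i j) (fun k => s k) := by
  have hspin : SpinVec fun k : {k // k ≠ j} => s k := fun k => hs.1 k
  refine ⟨hspin, fun t' ht' => ?_⟩
  have hle := hs.2 _ (spinVec_antiExtend hij ht')
  rw [ising_antiExtend_of_spinVec hij hJ ht', ← antiExtend_restrict_of_groundState hij hanti hs,
    ising_antiExtend_of_spinVec hij hJ hspin] at hle
  linarith

theorem groundState_antiExtend (hJ : ∀ k l, J k l = J l k) {s' : {k // k ≠ j} → ℝ}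
    (hs' : GroundState (flipMergeCoupling J i j) (flipMergeField h i j) s') :
    GroundState J h (antiExtend hij s') := by
  refine ⟨spinVec_antiExtend hij hs'.1, fun t ht => ?_⟩
  obtain ⟨s₀, hs₀⟩ := exists_groundState J h
  have hs₀' := groundState_restrict hij hanti hJ hs₀
  calc ising J h (antiExtend hij s')
      = ising (flipMergeCoupling J i j) (flipMergeField h i j) s' + J i j :=
        ising_antiExtend_of_spinVec hij hJ hs'.1
    _ ≤ ising (flipMergeCoupling J i j) (flipMergeField h i j) (fun k => s₀ k) + J i j := by
        gcongr; exact hs'.2 _ hs₀'.1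
    _ = ising J h s₀ := by
        rw [← ising_antiExtend_of_spinVec hij hJ hs₀'.1,
          antiExtend_restrict_of_groundState hij hanti hs₀]
    _ ≤ ising J h t := hs₀.2 t ht

theorem bijOn_antiExtend_groundState (hJ : ∀ k l, J k l = J l k) :
    Set.BijOn (antiExtend hij)
      {s' | GroundState (flipMergeCoupling J i j) (flipMergeField h i j) s'}
      {s | GroundState J h s} :=
  ⟨fun _ hs' => groundState_antiExtend hij hanti hJ hs', (antiExtend_injective hij).injOn,
    fun s hs => ⟨fun k => s k, groundState_restrict hij hanti hJ hs,
      antiExtend_restrict_of_groundState hij hanti hs⟩⟩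

theorem sInf_flipMerge_energy (hJ : ∀ k l, J k l = J l k) :
    sInf {E : ℝ | ∃ s' : {k // k ≠ j} → ℝ,
        SpinVec s' ∧ ising (flipMergeCoupling J i j) (flipMergeField h i j) s' = E}
      = sInf {E : ℝ | ∃ s : ι → ℝ, SpinVec s ∧ ising J h s = E} - J i j := by
  obtain ⟨s₀, hs₀⟩ := exists_groundState J h
  have hs₀' := groundState_restrict hij hanti hJ hs₀
  have hE := ising_antiExtend_of_spinVec hij hJ (h := h) hs₀'.1
  rw [antiExtend_restrict_of_groundState hij hanti hs₀] at hE
  rw [hs₀.sInf_energy_eq, hs₀'.sInf_energy_eq]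
  linarith

end Ising

/-- If every ground state of `H` has `s_i = −s_j` (the edge `(i,j)` is anti-aligned),
then the flip-merged Hamiltonian `H_FM` (delete spin `j`, set the coupling between `i`
and each `k ∉ {i,j}` to `J_{ik} − J_{jk}`, set the field at `i` to `h_i − h_j`) satisfies
`min H_FM = min H − J_{ij}`, and extending a configuration on the remaining spins by
`s_j := −s_i` is a bijection from the ground states of `H_FM` onto the ground states
of `H`. -/
theorem ising_flipMerge_groundStates {n : ℕ} (J : Fin n → Fin n → ℝ) (h : Fin n → ℝ)
    (hJsymm : ∀ k l, J k l = J l k)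
    (i j : Fin n) (hij : i ≠ j)
    (J' : {k : Fin n // k ≠ j} → {k : Fin n // k ≠ j} → ℝ)
    (h' : {k : Fin n // k ≠ j} → ℝ)
    (hJ' : ∀ k l : {k : Fin n // k ≠ j},
      J' k l = if (k : Fin n) = i then J k l - J j l
               else if (l : Fin n) = i then J k l - J k j
               else J k l)
    (hh' : ∀ k : {k : Fin n // k ≠ j},
      h' k = if (k : Fin n) = i then h i - h j else h k)
    (hanti : ∀ s : Fin n → ℝ, GroundState J h s → s i = -(s j)) :
    sInf {E : ℝ | ∃ s' : {k : Fin n // k ≠ j} → ℝ, SpinVec s' ∧ ising J' h' s' = E}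
      = sInf {E : ℝ | ∃ s : Fin n → ℝ, SpinVec s ∧ ising J h s = E} - J i j ∧
    Set.BijOn
      (fun (s' : {k : Fin n // k ≠ j} → ℝ) (k : Fin n) =>
        if hk : k = j then -(s' ⟨i, hij⟩) else s' ⟨k, hk⟩)
      {s' | GroundState J' h' s'} {s | GroundState J h s} := by
  obtain rfl : J' = flipMergeCoupling J i j := funext₂ hJ'
  obtain rfl : h' = flipMergeField h i j := funext hh'
  exact ⟨sInf_flipMerge_energy hij hanti hJsymm, bijOn_antiExtend_groundState hij hanti hJsymm⟩
end
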